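/- arXiv:2506.17178 — 3 statements merged into one kernel-verified Lean document; each statement's English description precedes it below -/
import Mathlib

section
/- For every natural number κ, the function x ↦ (e^{x/2} − e^{−x/2}·e_{2κ}(x)) / x^κ is monotonically increasing on the interval (0, ∞). (Equivalently, the M-Whittaker function M_{κ,κ+1/2} is monotonically increasing on (0,∞); the paper uses the case κ = 5.) -/
open Real Set

/-- `taylorExp j x = ∑_{n=0}^{j} x^n / n!`, the `j`-th order Taylor approximation of `e^x`. -/
noncomputable def taylorExp (j : ℕ) (x : ℝ) : ℝ :=
  ∑ n ∈ Finset.range (j + 1), x ^ n / n.factorial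

/-!
With `R = e^x - e_{2κ}(x)` the function is `e^{-x/2} R(x) / x^κ`, whose derivative is
`e^{-x/2} / (2 x^{κ+1}) · ((x - 2κ) R(x) + 2 x^{2κ+1} / (2κ)!)`. The bracket is nonnegative for
`x ≥ 0` because `(x - j)(e^x - e_j(x)) + x^{j+1}/j! = ∑_{n ≥ 0} (n + 1) x^{n+j+1}/(n+j+1)!`,
which follows termwise from `x · x^m/m! = (m + 1) x^{m+1}/(m + 1)!`.
-/

lemma taylorExp_succ (j : ℕ) (x : ℝ) :
    taylorExp (j + 1) x = taylorExp j x + x ^ (j + 1) / (j + 1).factorial :=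
  Finset.sum_range_succ _ _

lemma hasDerivAt_taylorExp (j : ℕ) (x : ℝ) :
    HasDerivAt (taylorExp j) (taylorExp j x - x ^ j / j.factorial) x := by
  induction j with
  | zero =>
    have h : taylorExp 0 = fun _ => 1 := funext fun y => by simp [taylorExp]
    simpa [h] using hasDerivAt_const x (1 : ℝ)
  | succ j ih =>
    have hpow : HasDerivAt (fun y : ℝ => y ^ (j + 1) / (j + 1).factorial)
        (x ^ j / j.factorial) x := by
      refine ((hasDerivAt_pow (j + 1) x).div_const ((j + 1).factorial : ℝ)).congr_deriv ?_
      rw [Nat.factorial_succ]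
      push_cast
      field_simp
    rw [funext (taylorExp_succ j)]
    refine (ih.add hpow).congr_deriv ?_
    ring

lemma hasSum_pow_div_factorial_add (j : ℕ) (x : ℝ) :
    HasSum (fun n => x ^ (n + j) / (n + j).factorial)
      (exp x - ∑ n ∈ Finset.range j, x ^ n / n.factorial) := by
  refine (hasSum_nat_add_iff' j).mpr ?_
  rw [exp_eq_exp_ℝ]
  exact NormedSpace.expSeries_div_hasSum_exp x

lemma hasSum_sub_mul_exp_sub_taylorExp (j : ℕ) (x : ℝ) :
    HasSum (fun n => (n + 1) * (x ^ (n + j + 1) / (n + j + 1).factorial))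
      ((x - j) * (exp x - taylorExp j x) + x ^ (j + 1) / j.factorial) := by
  have hj := (hasSum_pow_div_factorial_add j x).mul_left x
  have hj1 := (hasSum_pow_div_factorial_add (j + 1) x).mul_left (j : ℝ)
  have hsum : (x - j) * (exp x - taylorExp j x) + x ^ (j + 1) / j.factorial
      = x * (exp x - ∑ n ∈ Finset.range j, x ^ n / n.factorial)
        - j * (exp x - ∑ n ∈ Finset.range (j + 1), x ^ n / n.factorial) := by
    have hT : ∑ n ∈ Finset.range j, x ^ n / n.factorial
        = taylorExp j x - x ^ j / j.factorial := by
      rw [taylorExp, Finset.sum_range_succ]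
      ring
    rw [hT, ← taylorExp]
    ring
  rw [hsum]
  refine (hj.sub hj1).congr_fun fun n => ?_
  rw [← add_assoc, Nat.factorial_succ (n + j)]
  push_cast
  field_simp
  ring

lemma sub_mul_exp_sub_taylorExp_add_nonneg (j : ℕ) {x : ℝ} (hx : 0 ≤ x) :
    0 ≤ (x - j) * (exp x - taylorExp j x) + x ^ (j + 1) / j.factorial :=
  (hasSum_sub_mul_exp_sub_taylorExp j x).nonneg fun n => by positivity

/-- `M_{κ,κ+1/2}(x) / (2κ+1)!`. -/
noncomputable def normalizedWhittakerM (κ : ℕ) (x : ℝ) : ℝ :=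
  (exp (x / 2) - exp (-(x / 2)) * taylorExp (2 * κ) x) / x ^ κ

lemma normalizedWhittakerM_eq (κ : ℕ) :
    normalizedWhittakerM κ = fun x => exp (-(x / 2)) * (exp x - taylorExp (2 * κ) x) / x ^ κ := by
  funext x
  rw [normalizedWhittakerM, mul_sub, ← exp_add]
  ring_nf

lemma hasDerivAt_normalizedWhittakerM (κ : ℕ) {x : ℝ} (hx : x ≠ 0) :
    HasDerivAt (normalizedWhittakerM κ)
      (exp (-(x / 2)) / (2 * x ^ (κ + 1)) *
        ((x - (2 * κ : ℕ)) * (exp x - taylorExp (2 * κ) x) +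
          2 * (x ^ (2 * κ + 1) / (2 * κ).factorial))) x := by
  have hexp : HasDerivAt (fun y => exp (-(y / 2))) (-(exp (-(x / 2)) / 2)) x := by
    simpa [div_eq_mul_inv] using ((hasDerivAt_id x).div_const 2).neg.exp
  have hrem := (hasDerivAt_exp x).sub (hasDerivAt_taylorExp (2 * κ) x)
  rw [normalizedWhittakerM_eq]
  refine ((hexp.mul hrem).div (hasDerivAt_pow κ x) (pow_ne_zero κ hx)).congr_deriv ?_
  have hpow : (κ : ℝ) * x ^ (κ - 1) * x = κ * x ^ κ := by
    cases κ with
    | zero => simp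
    | succ k => rw [Nat.add_sub_cancel, mul_assoc, ← pow_succ]
  simp only [Pi.sub_apply, Pi.mul_apply]
  field_simp
  rw [pow_succ]
  push_cast
  linear_combination (-2 * (2 * κ).factorial * (exp x - taylorExp (2 * κ) x) * x ^ κ) * hpow

/-- For every natural number `κ`, the function
`x ↦ (e^{x/2} − e^{−x/2}·e_{2κ}(x)) / x^κ` is monotonically increasing on `(0, ∞)`. -/
theorem whittaker_M_monotoneOn (κ : ℕ) :
    MonotoneOn
      (fun x : ℝ => (Real.exp (x / 2) - Real.exp (-(x / 2)) * taylorExp (2 * κ) x) / x ^ κ)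
      (Set.Ioi (0 : ℝ)) := by
  change MonotoneOn (normalizedWhittakerM κ) (Ioi 0)
  have hderiv (x : ℝ) (hx : x ∈ Ioi (0 : ℝ)) := hasDerivAt_normalizedWhittakerM κ hx.ne'
  refine monotoneOn_of_hasDerivWithinAt_nonneg (convex_Ioi 0)
    (fun x hx => (hderiv x hx).continuousAt.continuousWithinAt)
    (fun x hx => (hderiv x (interior_subset hx)).hasDerivWithinAt) fun x hx => ?_
  rw [interior_Ioi, mem_Ioi] at hx
  have hrem := sub_mul_exp_sub_taylorExp_add_nonneg (2 * κ) hx.le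
  have hterm : 0 ≤ x ^ (2 * κ + 1) / (2 * κ).factorial := by positivity
  exact mul_nonneg (by positivity) (by linarith)
end

section
/- The family (c,d) ↦ 1/(c² + cd + d²)^6, indexed by pairs of integers (c,d) ≠ (0,0), is summable, and its sum satisfies ∑_{(c,d) ∈ ℤ² \ {(0,0)}} 1/(c² + cd + d²)^6 ≤ 6.0099. -/
open scoped BigOperators


lemma key_ineq {x : ℝ} (hx : 2 ≤ x) :
    1 / x ^ 6 ≤ (1/5) * (1 / (x-1)^5 - 1 / x^5) := by
  have h1 : 0 < x - 1 := by linarith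
  have h0 : 0 < x := by linarith
  have e : (1/5) * (1 / (x-1)^5 - 1 / x^5) - 1 / x^6
      = (15*x^4 - 40*x^3 + 45*x^2 - 24*x + 5) / (5*(x-1)^5*x^6) := by
    field_simp
    ring
  have hnum : (0:ℝ) ≤ 15*x^4 - 40*x^3 + 45*x^2 - 24*x + 5 := by nlinarith [sq_nonneg (x-2), sq_nonneg x, sq_nonneg (x-1), sq_nonneg (x^2-2*x)]
  have hden : 0 < 5*(x-1)^5*x^6 := by positivity
  nlinarith [div_nonneg hnum (le_of_lt hden)]

/-- tail bound for the shifted 6-th power series -/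
lemma tail6 (N : ℕ) (hN : 1 ≤ N) :
    Summable (fun n : ℕ => 1 / ((n : ℝ) + N) ^ 6) ∧
    ∑' n : ℕ, 1 / ((n : ℝ) + N) ^ 6 ≤ 1 / (N:ℝ)^6 + 1/(5 * (N:ℝ)^5) := by
  have hsum : Summable (fun n : ℕ => 1 / ((n : ℝ) + N) ^ 6) := by
    have := (summable_nat_add_iff (f := fun n : ℕ => 1 / (n:ℝ)^6) N).mpr
      (Real.summable_one_div_nat_pow.mpr (by norm_num))
    refine this.congr fun n => by push_cast; ring_nf
  refine ⟨hsum, ?_⟩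
  apply Summable.tsum_le_of_sum_le hsum
  intro s
  obtain ⟨M, hM⟩ := s.exists_nat_subset_range
  have hmono : ∑ n ∈ s, 1 / ((n : ℝ) + N) ^ 6 ≤ ∑ n ∈ Finset.range (M+1), 1 / ((n : ℝ) + N) ^ 6 := by
    apply Finset.sum_le_sum_of_subset_of_nonneg
    · exact hM.trans (Finset.range_subset_range.mpr (Nat.le_succ M))
    · intro i _ _; positivity
  refine hmono.trans ?_
  have key : ∀ M : ℕ, ∑ n ∈ Finset.range (M+1), 1 / ((n : ℝ) + N) ^ 6
      ≤ 1 / (N:ℝ)^6 + (1/5) * (1/(N:ℝ)^5 - 1/((M:ℝ)+N)^5) := by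
    intro M
    induction M with
    | zero => simp
    | succ m ih =>
      rw [Finset.sum_range_succ]
      have hx : 2 ≤ ((m:ℝ)+1) + N := by
        have : (1:ℝ) ≤ N := by exact_mod_cast hN
        have : (0:ℝ) ≤ m := Nat.cast_nonneg m
        linarith
      have := key_ineq hx
      have hsimp : ((m:ℝ)+1) + N - 1 = (m:ℝ) + N := by ring
      rw [hsimp] at this
      push_cast
      push_cast at ih this
      linarith
  refine (key M).trans ?_
  have hNpos : (0:ℝ) < N := by exact_mod_cast hN
  have : 0 ≤ 1/((M:ℝ)+N)^5 := by positivity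
  have h5 : (1:ℝ)/5 * (1/(N:ℝ)^5) = 1/(5*(N:ℝ)^5) := by field_simp
  nlinarith


noncomputable def fnat (N : ℕ) : ℕ → ℝ := fun n => if N ≤ n then 1/(n:ℝ)^6 else 0

lemma fnat_nonneg (N : ℕ) (n : ℕ) : 0 ≤ fnat N n := by
  unfold fnat; split <;> positivity

lemma natTail (N : ℕ) (hN : 1 ≤ N) :
    Summable (fnat N) ∧ ∑' n, fnat N n ≤ 1/(N:ℝ)^6 + 1/(5*(N:ℝ)^5) := by
  have hle : ∀ n, fnat N n ≤ 1/(n:ℝ)^6 := by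
    intro n; unfold fnat; split
    · exact le_refl _
    · positivity
  have hsum : Summable (fnat N) :=
    Summable.of_nonneg_of_le (fnat_nonneg N) hle
      (Real.summable_one_div_nat_pow.mpr (by norm_num))
  refine ⟨hsum, ?_⟩
  have hshift : ∀ n : ℕ, fnat N (n + N) = 1 / ((n : ℝ) + N) ^ 6 := by
    intro n; unfold fnat
    rw [if_pos (Nat.le_add_left N n)]
    push_cast; ring_nf
  have hsplit := (Summable.sum_add_tsum_nat_add (f := fnat N) N hsum).symm
  rw [hsplit]
  have h0 : ∑ i ∈ Finset.range N, fnat N i = 0 := by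
    apply Finset.sum_eq_zero
    intro i hi
    unfold fnat
    rw [if_neg (Nat.not_le.mpr (Finset.mem_range.mp hi))]
  rw [h0, zero_add, tsum_congr hshift]
  exact (tail6 N hN).2

noncomputable def fint (N : ℕ) : ℤ → ℝ := fun c => if (N:ℤ) ≤ |c| then 1/(c:ℝ)^6 else 0

lemma fint_nonneg (N : ℕ) (c : ℤ) : 0 ≤ fint N c := by
  unfold fint; split <;> positivity

lemma fint_nat (N : ℕ) (n : ℕ) : fint N (n : ℤ) = fnat N n := by
  unfold fint fnat
  rcases le_or_gt N n with h | h
  · rw [if_pos (by exact_mod_cast (by simpa using h : (N:ℤ) ≤ n)), if_pos h]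
    norm_num
  · rw [if_neg (by simp; exact_mod_cast h), if_neg (Nat.not_le.mpr h)]

lemma fint_neg (N : ℕ) (n : ℕ) : fint N (-((n : ℤ) + 1)) = fnat N (n + 1) := by
  unfold fint fnat
  have habs : |(-((n : ℤ) + 1))| = (n : ℤ) + 1 := by
    rw [abs_neg]; exact abs_of_nonneg (by positivity)
  rw [habs]
  rcases le_or_gt N (n+1) with h | h
  · rw [if_pos (by exact_mod_cast h), if_pos h]
    push_cast
    rw [Even.neg_pow (by decide)]
  · rw [if_neg (by push_cast; omega), if_neg (Nat.not_le.mpr h)]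

lemma intTail (N : ℕ) (hN : 1 ≤ N) :
    Summable (fint N) ∧ ∑' c, fint N c ≤ 2*(1/(N:ℝ)^6 + 1/(5*(N:ℝ)^5)) := by
  obtain ⟨hsum, hbnd⟩ := natTail N hN
  have h1 : Summable (fun n : ℕ => fint N (n : ℤ)) := hsum.congr (fun n => (fint_nat N n).symm)
  have hshift : Summable (fun n : ℕ => fnat N (n+1)) := (summable_nat_add_iff 1).mpr hsum
  have h2 : Summable (fun n : ℕ => fint N (-((n:ℤ)+1))) :=
    hshift.congr (fun n => (fint_neg N n).symm)
  have hS : Summable (fint N) := Summable.of_nat_of_neg_add_one h1 h2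
  refine ⟨hS, ?_⟩
  rw [tsum_of_nat_of_neg_add_one h1 h2]
  have e1 : ∑' n : ℕ, fint N (n : ℤ) = ∑' n, fnat N n := tsum_congr (fint_nat N)
  have e2 : ∑' n : ℕ, fint N (-((n:ℤ)+1)) = ∑' n, fnat N (n+1) := tsum_congr (fint_neg N)
  have hsplit := (Summable.sum_add_tsum_nat_add (f := fnat N) 1 hsum).symm
  have h0 : 0 ≤ ∑ i ∈ Finset.range 1, fnat N i :=
    Finset.sum_nonneg (fun i _ => fnat_nonneg N i)
  have hle2 : ∑' n, fnat N (n+1) ≤ ∑' n, fnat N n := by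
    rw [hsplit]; linarith
  rw [e1, e2]
  linarith



noncomputable def gint : ℤ → ℝ := fun c => if (5:ℤ) ≤ |c| then 1/(c:ℝ)^12 else 0

lemma gint_nonneg (c : ℤ) : 0 ≤ gint c := by unfold gint; split <;> positivity

lemma gint_le (c : ℤ) : gint c ≤ (1/15625) * fint 5 c := by
  unfold gint fint
  norm_num
  split
  · rename_i h
    have h5 : (5:ℝ) ≤ |(c:ℝ)| := by exact_mod_cast (by push_cast at h ⊢; exact_mod_cast h : (5:ℤ) ≤ |c|)
    have hc6 : (15625:ℝ) ≤ (c:ℝ)^6 := by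
      have := pow_le_pow_left₀ (by norm_num : (0:ℝ) ≤ 5) h5 6
      calc (15625:ℝ) = 5^6 := by norm_num
        _ ≤ |(c:ℝ)|^6 := this
        _ = (c:ℝ)^6 := by rw [← abs_pow]; exact abs_of_nonneg (by positivity)
    have hpos : (0:ℝ) < (c:ℝ)^6 := by nlinarith
    rw [one_div, ← mul_inv]
    apply inv_anti₀ (by positivity)
    nlinarith
  · positivity

noncomputable def bnd : ℤ → ℝ := fun d => if |d| ≤ 1 then 1 else 0

lemma bnd_nonneg (d : ℤ) : 0 ≤ bnd d := by unfold bnd; split <;> norm_num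

lemma bnd_summable : Summable bnd := by
  apply summable_of_ne_finset_zero (s := ({-1,0,1} : Finset ℤ))
  intro d hd
  simp only [Finset.mem_insert, Finset.mem_singleton] at hd
  push_neg at hd
  unfold bnd
  rw [if_neg (by rw [abs_le]; omega)]

lemma bnd_tsum : ∑' d, bnd d = 3 := by
  rw [tsum_eq_sum (s := ({-1,0,1} : Finset ℤ)) (by
    intro d hd
    simp only [Finset.mem_insert, Finset.mem_singleton] at hd
    push_neg at hd
    unfold bnd
    rw [if_neg (by rw [abs_le]; omega)])]
  unfold bnd
  norm_num
  rw [show (Finset.filter (fun x:ℤ => |x| ≤ 1) {-1,0,1}) = ({-1,0,1}:Finset ℤ) from by decide]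
  norm_num


noncomputable def F : ℤ × ℤ → ℝ :=
  fun p => (1 : ℝ) / ((p.1 : ℝ) ^ 2 + (p.1 : ℝ) * (p.2 : ℝ) + (p.2 : ℝ) ^ 2) ^ 6

lemma F_nonneg (p : ℤ × ℤ) : 0 ≤ F p := by
  unfold F
  have h : (0:ℝ) ≤ ((p.1 : ℝ) ^ 2 + (p.1 : ℝ) * (p.2 : ℝ) + (p.2 : ℝ) ^ 2) := by
    nlinarith [sq_nonneg ((p.1:ℝ) + (p.2:ℝ)), sq_nonneg ((p.1:ℝ) - (p.2:ℝ)), sq_nonneg (p.1:ℝ), sq_nonneg (p.2:ℝ)]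
  positivity

lemma F_swap (c d : ℤ) : F (c, d) = F (d, c) := by
  unfold F; ring_nf

lemma ineq1 {c d : ℤ} (hd : |d| ≤ 1) (hc : 4 ≤ |c|) :
    F (c, d) ≤ (4/3:ℝ)^6 * (1/(c:ℝ)^12) := by
  unfold F
  set x := (c:ℝ); set y := (d:ℝ)
  have hdr : |y| ≤ 1 := by unfold y; exact_mod_cast (by exact_mod_cast hd : |(d:ℝ)| ≤ 1)
  have hcr : 4 ≤ |x| := by unfold x; exact_mod_cast (by exact_mod_cast hc : (4:ℝ) ≤ |(c:ℝ)|)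
  have habs : |x * y| = |x| * |y| := abs_mul x y
  have hneg : -(|x| * |y|) ≤ x * y := by rw [← habs]; exact neg_abs_le _
  have hprod : |x| * |y| ≤ |x| := by
    nlinarith [abs_nonneg x, abs_nonneg y]
  have hsx : x^2 = |x|^2 := (sq_abs x).symm
  have hQ : (3/4) * x^2 ≤ x^2 + x*y + y^2 := by nlinarith [sq_nonneg y, abs_nonneg x]
  have hx2 : (16:ℝ) ≤ x^2 := by nlinarith
  have hQpos : 0 < x^2 + x*y + y^2 := by nlinarith
  have hpow : ((3/4) * x^2)^6 ≤ (x^2 + x*y + y^2)^6 :=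
    pow_le_pow_left₀ (by positivity) hQ 6
  have hexp : ((3/4:ℝ) * x^2)^6 = (3/4:ℝ)^6 * x^12 := by ring
  have h1 : 1/(x^2 + x*y + y^2)^6 ≤ 1/((3/4:ℝ)^6 * x^12) := by
    apply one_div_le_one_div_of_le
    · rw [← hexp]; positivity
    · rw [← hexp]; exact hpow
  refine h1.trans_eq ?_
  rw [one_div, one_div, mul_inv]
  norm_num

lemma ineq2 {c d : ℤ} (hc : 1 ≤ |c|) (hd : 1 ≤ |d|) :
    F (c, d) ≤ (1/(c:ℝ)^6) * (1/(d:ℝ)^6) := by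
  unfold F
  set x := (c:ℝ); set y := (d:ℝ)
  have hcr : 1 ≤ |x| := by unfold x; exact_mod_cast (by exact_mod_cast hc : (1:ℝ) ≤ |(c:ℝ)|)
  have hdr : 1 ≤ |y| := by unfold y; exact_mod_cast (by exact_mod_cast hd : (1:ℝ) ≤ |(d:ℝ)|)
  have habs : |x * y| = |x| * |y| := abs_mul x y
  have hneg : -(|x| * |y|) ≤ x * y := by rw [← habs]; exact neg_abs_le _
  have hsx : x^2 = |x|^2 := (sq_abs x).symm
  have hsy : y^2 = |y|^2 := (sq_abs y).symm
  have hQ : |x| * |y| ≤ x^2 + x*y + y^2 := by nlinarith [sq_nonneg (|x| - |y|)]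
  have hm1 : (1:ℝ) ≤ |x| * |y| := by nlinarith [abs_nonneg x, abs_nonneg y]
  have hQpos : 0 < x^2 + x*y + y^2 := by linarith
  have hpow : (|x| * |y|)^6 ≤ (x^2 + x*y + y^2)^6 :=
    pow_le_pow_left₀ (by positivity) hQ 6
  have hexp : (|x| * |y|)^6 = x^6 * y^6 := by
    rw [mul_pow, ← abs_pow, ← abs_pow, abs_of_nonneg (by positivity : (0:ℝ) ≤ x^6),
      abs_of_nonneg (by positivity : (0:ℝ) ≤ y^6)]
  have h1 : 1/(x^2 + x*y + y^2)^6 ≤ 1/(x^6 * y^6) := by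
    apply one_div_le_one_div_of_le
    · rw [← hexp]; positivity
    · rw [← hexp]; exact hpow
  refine h1.trans_eq ?_
  rw [one_div, one_div, one_div, mul_inv]



noncomputable def w : ℤ → ℝ := fun n => 1/((n:ℝ)^2+1)^3

lemma w_nonneg (n : ℤ) : 0 ≤ w n := by unfold w; positivity

lemma w_summable : Summable w := by
  have base : Summable (fun n : ℕ => 1/((n:ℝ)+1)^2) := by
    have h := (summable_nat_add_iff (f := fun n : ℕ => 1 / (n:ℝ)^2) 1).mpr
      (Real.summable_one_div_nat_pow.mpr (by norm_num))
    exact h.congr fun n => by push_cast; ring_nf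
  have hnat : Summable (fun n : ℕ => w (n : ℤ)) := by
    apply Summable.of_nonneg_of_le (fun n => w_nonneg _) _ base
    intro n
    unfold w
    apply one_div_le_one_div_of_le (by positivity)
    match n with
    | 0 => norm_num
    | (m+1) =>
      push_cast
      have h1 : (1:ℝ) ≤ (m:ℝ)+1 := by have := Nat.cast_nonneg (α:=ℝ) m; linarith
      nlinarith [sq_nonneg ((m:ℝ)+1), pow_le_pow_right₀ h1 (by norm_num : 2 ≤ 4)]
  have hneg : Summable (fun n : ℕ => w (-((n:ℤ)+1))) := by
    have : Summable (fun n : ℕ => w ((n:ℤ)+1)) := by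
      have := (summable_nat_add_iff (f := fun n : ℕ => w (n:ℤ)) 1).mpr hnat
      exact this.congr fun n => by push_cast; norm_num
    apply this.congr
    intro n
    unfold w
    push_cast
    ring_nf
  exact Summable.of_nat_of_neg_add_one hnat hneg

lemma F_le_prod (p : ℤ × ℤ) : F p ≤ 729 * (w p.1 * w p.2) := by
  obtain ⟨c, d⟩ := p
  by_cases hp : c = 0 ∧ d = 0
  · obtain ⟨rfl, rfl⟩ := hp
    unfold F w
    norm_num
  · unfold F w
    simp only
    set x := (c:ℝ); set y := (d:ℝ)
    have h1 : (1:ℝ) ≤ x^2 + y^2 := by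
      rcases Decidable.not_and_iff_or_not.mp hp with h | h
      · have : 1 ≤ |c| := Int.one_le_abs (by omega)
        have : (1:ℝ) ≤ |x| := by unfold x; exact_mod_cast this
        nlinarith [sq_abs x, sq_nonneg y, abs_nonneg x]
      · have : 1 ≤ |d| := Int.one_le_abs (by omega)
        have : (1:ℝ) ≤ |y| := by unfold y; exact_mod_cast this
        nlinarith [sq_abs y, sq_nonneg x, abs_nonneg y]
    have hQ2 : x^2 + y^2 ≤ 2*(x^2 + x*y + y^2) := by nlinarith [sq_nonneg (x+y)]
    have hQpos : 0 < x^2 + x*y + y^2 := by linarith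
    have key : (x^2+1)*(y^2+1) ≤ 9*(x^2 + x*y + y^2)^2 := by
      nlinarith [sq_nonneg (x^2 - y^2), sq_nonneg (x+y), sq_nonneg (x*y), sq_nonneg (x^2+y^2)]
    have hcube : ((x^2+1)*(y^2+1))^3 ≤ (9*(x^2 + x*y + y^2)^2)^3 :=
      pow_le_pow_left₀ (by positivity) key 3
    have hX : (0:ℝ) < ((x^2+1)*(y^2+1))^3 := by positivity
    have hstep : 1/(x^2 + x*y + y^2)^6 ≤ 729/((x^2+1)*(y^2+1))^3 := by
      rw [div_le_div_iff₀ (by positivity) hX]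
      nlinarith [hcube]
    refine hstep.trans_eq ?_
    rw [mul_pow, div_eq_mul_inv, mul_inv, one_div, one_div]

lemma F_summable : Summable F := by
  apply Summable.of_nonneg_of_le _ F_le_prod
  · exact ((w_summable.mul_of_nonneg w_summable w_nonneg w_nonneg).mul_left 729)
  · intro p
    unfold F
    have h : (0:ℝ) ≤ ((p.1 : ℝ) ^ 2 + (p.1 : ℝ) * (p.2 : ℝ) + (p.2 : ℝ) ^ 2) := by
      nlinarith [sq_nonneg ((p.1:ℝ) + (p.2:ℝ)), sq_nonneg ((p.1:ℝ) - (p.2:ℝ))]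
    positivity



set_option maxHeartbeats 2000000 in
lemma box_sum :
    ∑ p ∈ (Finset.Icc (-4:ℤ) 4) ×ˢ (Finset.Icc (-4:ℤ) 4), F p ≤ 6.009814 := by
  have hIcc : Finset.Icc (-4:ℤ) 4 = {-4,-3,-2,-1,0,1,2,3,4} := by decide
  rw [Finset.sum_product, hIcc]
  unfold F
  norm_num [Finset.sum_insert, Finset.mem_insert, Finset.mem_singleton]




noncomputable def G : ℤ × ℤ → ℝ := fun p =>
  (4/3:ℝ)^6 * (gint p.1 * bnd p.2) + (4/3:ℝ)^6 * (bnd p.1 * gint p.2)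
    + fint 5 p.1 * fint 2 p.2 + fint 2 p.1 * fint 5 p.2

lemma G_nonneg (p : ℤ × ℤ) : 0 ≤ G p := by
  unfold G
  have h1 := gint_nonneg p.1; have h2 := gint_nonneg p.2
  have h3 := bnd_nonneg p.1; have h4 := bnd_nonneg p.2
  have h5 := fint_nonneg 5 p.1; have h6 := fint_nonneg 2 p.2
  have h7 := fint_nonneg 2 p.1; have h8 := fint_nonneg 5 p.2
  positivity

lemma F_le_G {p : ℤ × ℤ} (h : 5 ≤ |p.1| ∨ 5 ≤ |p.2|) : F p ≤ G p := by
  obtain ⟨c, d⟩ := p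
  simp only at h
  have h1 := gint_nonneg c; have h2 := gint_nonneg d
  have h3 := bnd_nonneg c; have h4 := bnd_nonneg d
  have h5 := fint_nonneg 5 c; have h6 := fint_nonneg 2 d
  have h7 := fint_nonneg 2 c; have h8 := fint_nonneg 5 d
  rcases le_or_gt (|d|) 1 with hd1 | hd1
  · -- |d| ≤ 1, so 5 ≤ |c|
    have hc : 5 ≤ |c| := by rcases h with h | h; exact h; omega
    have : F (c, d) ≤ (4/3:ℝ)^6 * (gint c * bnd d) := by
      have := ineq1 hd1 (by omega : 4 ≤ |c|)
      unfold gint bnd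
      rw [if_pos hc, if_pos hd1, mul_one]
      exact this
    unfold G
    simp only
    nlinarith [mul_nonneg h5 h6, mul_nonneg h7 h8, mul_nonneg h3 h2]
  · rcases le_or_gt (|c|) 1 with hc1 | hc1
    · have hd : 5 ≤ |d| := by rcases h with h | h; omega; exact h
      have : F (c, d) ≤ (4/3:ℝ)^6 * (bnd c * gint d) := by
        have := ineq1 (d := c) hc1 (by omega : 4 ≤ |d|)
        rw [F_swap] at this
        unfold gint bnd
        rw [if_pos hd, if_pos hc1, one_mul]
        exact this
      unfold G
      simp only
      nlinarith [mul_nonneg h5 h6, mul_nonneg h7 h8, mul_nonneg (mul_nonneg (by positivity : (0:ℝ) ≤ (4/3:ℝ)^6) h1) h4]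
    · -- both ≥ 2
      have hc2 : 2 ≤ |c| := by omega
      have hd2 : 2 ≤ |d| := by omega
      have hF := ineq2 (by omega : 1 ≤ |c|) (by omega : 1 ≤ |d|)
      rcases h with h | h
      · have : F (c, d) ≤ fint 5 c * fint 2 d := by
          unfold fint
          rw [if_pos (by omega), if_pos (by omega)]
          exact hF
        unfold G
        simp only
        nlinarith [mul_nonneg h7 h8, mul_nonneg (mul_nonneg (by positivity : (0:ℝ) ≤ (4/3:ℝ)^6) h1) h4, mul_nonneg (mul_nonneg (by positivity : (0:ℝ) ≤ (4/3:ℝ)^6) h3) h2]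
      · have : F (c, d) ≤ fint 2 c * fint 5 d := by
          unfold fint
          rw [if_pos (by omega), if_pos (by omega)]
          exact hF
        unfold G
        simp only
        nlinarith [mul_nonneg h5 h6, mul_nonneg (mul_nonneg (by positivity : (0:ℝ) ≤ (4/3:ℝ)^6) h1) h4, mul_nonneg (mul_nonneg (by positivity : (0:ℝ) ≤ (4/3:ℝ)^6) h3) h2]

lemma gint_summable : Summable gint :=
  Summable.of_nonneg_of_le gint_nonneg gint_le (((intTail 5 (by norm_num)).1).mul_left _)

lemma gint_tsum : ∑' c, gint c ≤ 4/244140625 := by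
  have h5 := intTail 5 (by norm_num)
  calc ∑' c, gint c ≤ ∑' c, (1/15625) * fint 5 c :=
        Summable.tsum_le_tsum gint_le gint_summable (h5.1.mul_left _)
    _ = (1/15625) * ∑' c, fint 5 c := tsum_mul_left
    _ ≤ (1/15625) * (2*(1/(5:ℝ)^6 + 1/(5*(5:ℝ)^5))) := by
        have := h5.2; push_cast at this ⊢; nlinarith
    _ = 4/244140625 := by norm_num

-- pieces of G
lemma G1_summable : Summable (fun p : ℤ × ℤ => gint p.1 * bnd p.2) :=
  gint_summable.mul_of_nonneg bnd_summable gint_nonneg bnd_nonneg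
lemma G2_summable : Summable (fun p : ℤ × ℤ => bnd p.1 * gint p.2) :=
  bnd_summable.mul_of_nonneg gint_summable bnd_nonneg gint_nonneg
lemma G3_summable : Summable (fun p : ℤ × ℤ => fint 5 p.1 * fint 2 p.2) :=
  ((intTail 5 (by norm_num)).1).mul_of_nonneg ((intTail 2 (by norm_num)).1)
    (fint_nonneg 5) (fint_nonneg 2)
lemma G4_summable : Summable (fun p : ℤ × ℤ => fint 2 p.1 * fint 5 p.2) :=
  ((intTail 2 (by norm_num)).1).mul_of_nonneg ((intTail 5 (by norm_num)).1)
    (fint_nonneg 2) (fint_nonneg 5)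

lemma G_summable : Summable G :=
  (((G1_summable.mul_left _).add (G2_summable.mul_left _)).add G3_summable).add G4_summable

lemma G_tsum : ∑' p, G p ≤ 0.000024 := by
  have h5 := intTail 5 (by norm_num)
  have h2 := intTail 2 (by norm_num)
  have e1 : ∑' p : ℤ × ℤ, gint p.1 * bnd p.2 = (∑' c, gint c) * (∑' d, bnd d) :=
    (Summable.tsum_mul_tsum gint_summable bnd_summable G1_summable).symm
  have e2 : ∑' p : ℤ × ℤ, bnd p.1 * gint p.2 = (∑' c, bnd c) * (∑' d, gint d) :=
    (Summable.tsum_mul_tsum bnd_summable gint_summable G2_summable).symm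
  have e3 : ∑' p : ℤ × ℤ, fint 5 p.1 * fint 2 p.2 = (∑' c, fint 5 c) * (∑' d, fint 2 d) :=
    (Summable.tsum_mul_tsum h5.1 h2.1 G3_summable).symm
  have e4 : ∑' p : ℤ × ℤ, fint 2 p.1 * fint 5 p.2 = (∑' c, fint 2 c) * (∑' d, fint 5 d) :=
    (Summable.tsum_mul_tsum h2.1 h5.1 G4_summable).symm
  have split : ∑' p, G p
      = (4/3:ℝ)^6 * ((∑' c, gint c) * (∑' d, bnd d))
        + (4/3:ℝ)^6 * ((∑' c, bnd c) * (∑' d, gint d))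
        + (∑' c, fint 5 c) * (∑' d, fint 2 d)
        + (∑' c, fint 2 c) * (∑' d, fint 5 d) := by
    unfold G
    rw [Summable.tsum_add (((G1_summable.mul_left _).add (G2_summable.mul_left _)).add G3_summable) G4_summable,
      Summable.tsum_add ((G1_summable.mul_left _).add (G2_summable.mul_left _)) G3_summable,
      Summable.tsum_add (G1_summable.mul_left _) (G2_summable.mul_left _),
      tsum_mul_left, tsum_mul_left, e1, e2, e3, e4]
  rw [split, bnd_tsum]
  have hg := gint_tsum
  have hgn : 0 ≤ ∑' c, gint c := tsum_nonneg gint_nonneg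
  have h5n : 0 ≤ ∑' c, fint 5 c := tsum_nonneg (fint_nonneg 5)
  have h2n : 0 ≤ ∑' c, fint 2 c := tsum_nonneg (fint_nonneg 2)
  have h5b : ∑' c, fint 5 c ≤ 4/15625 := by
    have := h5.2; push_cast at this; nlinarith
  have h2b : ∑' c, fint 2 c ≤ 7/160 := by
    have := h2.2; push_cast at this; nlinarith
  nlinarith [mul_le_mul h5b h2b h2n (by norm_num), mul_le_mul h2b h5b h5n (by norm_num)]

open scoped BigOperators

/-- The family `(c,d) ↦ 1/(c² + cd + d²)^6`, indexed by pairs of integers `(c,d) ≠ (0,0)`,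
is summable and its sum is at most `6.0099`. -/
theorem epstein_zeta_six_bound :
    Summable (fun p : {p : ℤ × ℤ // p ≠ (0, 0)} =>
      (1 : ℝ) / ((p.1.1 : ℝ) ^ 2 + (p.1.1 : ℝ) * (p.1.2 : ℝ) + (p.1.2 : ℝ) ^ 2) ^ 6) ∧
    ∑' p : {p : ℤ × ℤ // p ≠ (0, 0)},
      (1 : ℝ) / ((p.1.1 : ℝ) ^ 2 + (p.1.1 : ℝ) * (p.1.2 : ℝ) + (p.1.2 : ℝ) ^ 2) ^ 6
      ≤ 6.0099 := by
  have hsub : Summable (fun p : {p : ℤ × ℤ // p ≠ (0, 0)} => F p.1) :=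
    F_summable.subtype _
  constructor
  · exact hsub
  · have hsupp : Function.support F ⊆ {p : ℤ × ℤ | p ≠ (0, 0)} := by
      intro p hp
      simp only [Set.mem_setOf_eq]
      intro h
      apply hp
      rw [h]
      unfold F
      norm_num
    have heq : ∑' p : {p : ℤ × ℤ // p ≠ (0, 0)},
        (1 : ℝ) / ((p.1.1 : ℝ) ^ 2 + (p.1.1 : ℝ) * (p.1.2 : ℝ) + (p.1.2 : ℝ) ^ 2) ^ 6
        = ∑' p : ℤ × ℤ, F p := tsum_subtype_eq_of_support_subset hsupp
    rw [heq]
    set B := (Finset.Icc (-4:ℤ) 4) ×ˢ (Finset.Icc (-4:ℤ) 4) with hB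
    have hsplit := Summable.sum_add_tsum_compl (s := B) F_summable
    rw [← hsplit]
    have htail : ∑' p : ((B : Set (ℤ × ℤ))ᶜ : Set (ℤ × ℤ)), F p ≤ 0.000024 := by
      have hle : ∀ p : ((B : Set (ℤ × ℤ))ᶜ : Set (ℤ × ℤ)), F p ≤ G p := by
        rintro ⟨p, hp⟩
        show F p ≤ G p
        apply F_le_G
        simp only [Set.mem_compl_iff, Finset.coe_product, Set.mem_prod, Finset.mem_coe,
          Finset.mem_Icc, hB] at hp
        rw [le_abs, le_abs]
        omega
      calc ∑' p : ((B : Set (ℤ × ℤ))ᶜ : Set (ℤ × ℤ)), F p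
          ≤ ∑' p : ((B : Set (ℤ × ℤ))ᶜ : Set (ℤ × ℤ)), G p :=
            Summable.tsum_le_tsum hle (F_summable.subtype _) (G_summable.subtype _)
        _ ≤ ∑' p : ℤ × ℤ, G p := Summable.tsum_subtype_le G _ G_nonneg G_summable
        _ ≤ 0.000024 := G_tsum
    have hbox := box_sum
    rw [← hB] at hbox
    norm_num at hbox htail ⊢
    linarith
end

section
/- Let k be an integer and let f be a function from the upper half-plane ℍ to ℂ such that f(−1/τ) = τ^k · f(τ) for all τ ∈ ℍ, and f(−conj(τ)) = conj(f(τ)) for all τ ∈ ℍ. Then for every θ ∈ (0, π), the complex number e^{ikθ/2} · f(e^{iθ}) is real. -/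
open Real Complex

/-- Let `k ∈ ℤ` and `f : ℂ → ℂ` satisfy, on the upper half-plane,
`f(−1/τ) = τ^k f(τ)` and `f(−conj τ) = conj (f τ)`. Then for every `θ ∈ (0, π)`,
the number `e^{ikθ/2} · f(e^{iθ})` is real. -/
theorem real_on_unit_arc (k : ℤ) (f : ℂ → ℂ)
    (hmod : ∀ τ : ℂ, 0 < τ.im → f (-1 / τ) = τ ^ k * f τ)
    (hreal : ∀ τ : ℂ, 0 < τ.im → f (-(starRingEnd ℂ) τ) = (starRingEnd ℂ) (f τ))
    (θ : ℝ) (hθ : θ ∈ Set.Ioo 0 Real.pi) :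
    (Complex.exp (Complex.I * k * θ / 2) * f (Complex.exp (Complex.I * θ))).im = 0 := by
  set τ : ℂ := Complex.exp (Complex.I * θ) with hτ
  have him : 0 < τ.im := by
    have : τ = Complex.exp ((θ : ℂ) * Complex.I) := by rw [hτ, mul_comm]
    rw [this, Complex.exp_ofReal_mul_I_im]
    exact Real.sin_pos_of_pos_of_lt_pi hθ.1 hθ.2
  have hconj : (starRingEnd ℂ) τ = Complex.exp (-(Complex.I * θ)) := by
    rw [hτ, ← Complex.exp_conj]
    congr 1
    simp
  have hinv : -1 / τ = -(starRingEnd ℂ) τ := by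
    rw [hconj, hτ, neg_div, one_div, ← Complex.exp_neg]
  have hpow : τ ^ k = Complex.exp (Complex.I * k * θ) := by
    rw [hτ, ← Complex.exp_int_mul]
    congr 1; ring
  have key : (starRingEnd ℂ) (f τ) = τ ^ k * f τ := by
    rw [← hreal τ him, ← hinv, hmod τ him]
  rw [← Complex.conj_eq_iff_im, map_mul, key, hpow, ← Complex.exp_conj]
  rw [show (starRingEnd ℂ) (Complex.I * k * θ / 2) = -(Complex.I * k * θ / 2) by simp [map_div₀, Complex.conj_ofNat]; ring]
  rw [← mul_assoc, ← Complex.exp_add]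
  congr 2
  ring
end
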